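/- arXiv:2104.05941 — 4 statements merged into one kernel-verified Lean document; each statement's English description precedes it below -/
import Mathlib

section
/- The level set Γ_{λ,h,μ} = {(x,y) ∈ ℝ⁴ : H_λ(x,y) = h, M(x,y) = μ} is nonempty if and only if μ ∈ [-h/λ, h/λ], for any λ > 0, h > 0, μ ∈ ℝ. -/
open Real

/-! Young's inequality and `|x₀ y₁ - x₁ y₀| ≤ ‖x‖ ‖y‖` give `λ |μ| ≤ H_λ(x, y) = h`.
Conversely, at the equality point of Young's inequality, `(λ ‖x‖)^p = ‖y‖^q = h`, one has
`λ ‖x‖ ‖y‖ = h`, and turning `y` at fixed norm sweeps `M(x, y)` over all of `[-h/λ, h/λ]`. -/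

lemma EuclideanSpace.norm_sq_fin_two (x : EuclideanSpace ℝ (Fin 2)) :
    ‖x‖ ^ 2 = x 0 ^ 2 + x 1 ^ 2 := by
  simp [EuclideanSpace.real_norm_sq_eq, Fin.sum_univ_two]

lemma abs_cross_le_norm_mul_norm (x y : EuclideanSpace ℝ (Fin 2)) :
    |x 0 * y 1 - x 1 * y 0| ≤ ‖x‖ * ‖y‖ := by
  refine abs_le_of_sq_le_sq ?_ (by positivity)
  -- Lagrange's identity: cross² + dot² = ‖x‖² ‖y‖².
  rw [mul_pow, EuclideanSpace.norm_sq_fin_two, EuclideanSpace.norm_sq_fin_two]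
  nlinarith [sq_nonneg (x 0 * y 0 + x 1 * y 1)]

lemma exists_norm_eq_norm_eq_cross_eq {a b mu : ℝ} (ha : 0 < a) (hb : 0 ≤ b)
    (hmu : |mu| ≤ a * b) :
    ∃ x y : EuclideanSpace ℝ (Fin 2), ‖x‖ = a ∧ ‖y‖ = b ∧ x 0 * y 1 - x 1 * y 0 = mu := by
  have ht : (mu / a) ^ 2 ≤ b ^ 2 := by
    rw [sq_le_sq, abs_of_nonneg hb, abs_div, abs_of_pos ha, div_le_iff₀' ha]
    exact hmu
  refine ⟨!₂[a, 0], !₂[√(b ^ 2 - (mu / a) ^ 2), mu / a], ?_, ?_, ?_⟩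
  · rw [← sq_eq_sq₀ (norm_nonneg _) ha.le, EuclideanSpace.norm_sq_fin_two]
    simp
  · rw [← sq_eq_sq₀ (norm_nonneg _) hb, EuclideanSpace.norm_sq_fin_two]
    simp [sq_sqrt (sub_nonneg.mpr ht)]
  · simp [mul_div_cancel₀ mu ha.ne']

lemma mul_mul_le_young {p q : ℝ} (hpq : p.HolderConjugate q) {lam a b : ℝ}
    (hlam : 0 ≤ lam) (ha : 0 ≤ a) (hb : 0 ≤ b) :
    lam * (a * b) ≤ lam ^ p * a ^ p / p + b ^ q / q := by
  rw [← mul_assoc, ← mul_rpow hlam ha]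
  exact young_inequality_of_nonneg (mul_nonneg hlam ha) hb hpq

-- The equality case of Young's inequality: `(lam a)^p = b^q = h`.
lemma young_equality_at_rpow_inv {p q : ℝ} (hpq : p.HolderConjugate q) {lam h : ℝ}
    (hlam : 0 < lam) (hh : 0 ≤ h) :
    lam ^ p * (h ^ p⁻¹ / lam) ^ p / p + (h ^ q⁻¹) ^ q / q = h ∧
      h ^ p⁻¹ / lam * h ^ q⁻¹ = h / lam := by
  constructor
  · rw [div_rpow (by positivity) hlam.le, ← rpow_mul hh, ← rpow_mul hh,
      inv_mul_cancel₀ hpq.ne_zero, inv_mul_cancel₀ hpq.symm.ne_zero, rpow_one,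
      mul_div_cancel₀ _ (rpow_pos_of_pos hlam p).ne', div_eq_mul_inv, div_eq_mul_inv, ← mul_add,
      hpq.inv_add_inv_eq_one, mul_one]
  · rw [div_mul_eq_mul_div, ← rpow_add' hh (by rw [hpq.inv_add_inv_eq_one]; norm_num),
      hpq.inv_add_inv_eq_one, rpow_one]

/-- For `λ > 0`, `h > 0`, `μ ∈ ℝ`, the level set
`Γ_{λ,h,μ} = {(x,y) : H_λ(x,y) = h, M(x,y) = μ}` is nonempty iff `μ ∈ [-h/λ, h/λ]`. -/
theorem level_set_nonempty_iff (p q lam h mu : ℝ) (hp : 1 < p) (hq : q = p / (p - 1))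
    (hlam : 0 < lam) (hh : 0 < h) :
    (∃ x y : EuclideanSpace ℝ (Fin 2),
        lam ^ p * ‖x‖ ^ p / p + ‖y‖ ^ q / q = h ∧
        x 0 * y 1 - x 1 * y 0 = mu) ↔
      mu ∈ Set.Icc (-(h / lam)) (h / lam) := by
  have hpq : p.HolderConjugate q := hq ▸ HolderConjugate.conjExponent hp
  rw [Set.mem_Icc, ← abs_le]
  constructor
  · rintro ⟨x, y, hH, rfl⟩
    rw [le_div_iff₀' hlam, ← hH]
    exact (mul_le_mul_of_nonneg_left (abs_cross_le_norm_mul_norm x y) hlam.le).trans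
      (mul_mul_le_young hpq hlam.le (norm_nonneg x) (norm_nonneg y))
  · intro hmu
    obtain ⟨hH, hab⟩ := young_equality_at_rpow_inv hpq hlam hh.le
    obtain ⟨x, y, hx, hy, hM⟩ := exists_norm_eq_norm_eq_cross_eq (by positivity)
      (by positivity) (hab ▸ hmu)
    exact ⟨x, y, hx ▸ hy ▸ hH, hM⟩
end

section
/- The function G_p(r) = p^(1/q) q^(1/p) (r - 1/p) / (r^(1/p) (1-r)^(1/q)) is strictly increasing on (0,1), tends to -∞ as r → 0⁺, vanishes at r = 1/p, and tends to +∞ as r → 1⁻. -/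
open Real Filter

open Set Topology

/-- The function `G_p(r) = p^(1/q) q^(1/p) (r - 1/p)/(r^(1/p)(1-r)^(1/q))`
is strictly increasing on `(0,1)`, tends to `-∞` as `r → 0⁺`, vanishes at `r = 1/p`,
and tends to `+∞` as `r → 1⁻`. -/
theorem G_p_properties (p q : ℝ) (hp : 1 < p) (hq : q = p / (p - 1))
    (G : ℝ → ℝ)
    (hG : ∀ r ∈ Set.Ioo (0:ℝ) 1,
      G r = p ^ (1/q) * q ^ (1/p) * (r - 1/p) / (r ^ (1/p) * (1 - r) ^ (1/q))) :
    StrictMonoOn G (Set.Ioo 0 1) ∧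
    Tendsto G (nhdsWithin 0 (Set.Ioo 0 1)) atBot ∧
    G (1/p) = 0 ∧
    Tendsto G (nhdsWithin 1 (Set.Ioo 0 1)) atTop := by
  have hp0 : 0 < p := lt_trans one_pos hp
  have hp1 : 0 < p - 1 := by linarith
  have hq0 : 0 < q := by rw [hq]; positivity
  have ha0 : 0 < 1/p := by positivity
  have ha1 : 1/p < 1 := by rw [div_lt_one hp0]; linarith
  set a : ℝ := 1/p with ha_def
  set C : ℝ := p ^ (1/q) * q ^ (1/p) with hC_def
  have hC0 : 0 < C := mul_pos (rpow_pos_of_pos hp0 _) (rpow_pos_of_pos hq0 _)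
  have hb : 1/q = 1 - a := by rw [hq, ha_def]; field_simp
  set b : ℝ := 1 - a with hb_def
  have hb0 : 0 < b := by rw [hb_def]; linarith
  set F : ℝ → ℝ := fun r => C * (r - a) / (r ^ a * (1 - r) ^ b) with hF_def
  have hGF : ∀ r ∈ Set.Ioo (0:ℝ) 1, G r = F r := by
    intro r hr
    rw [hG r hr, hb]
  -- derivative setup
  have hd_pos : ∀ r ∈ Set.Ioo (0:ℝ) 1, 0 < r ^ a * (1 - r) ^ b := by
    intro r hr
    exact mul_pos (rpow_pos_of_pos hr.1 _) (rpow_pos_of_pos (by linarith [hr.2]) _)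
  have hderiv : ∀ r ∈ Set.Ioo (0:ℝ) 1, ∃ v, 0 < v ∧ HasDerivAt F v r := by
    intro r hr
    obtain ⟨hr0, hr1⟩ := hr
    have h1r : 0 < 1 - r := by linarith
    have h1 : HasDerivAt (fun x : ℝ => x ^ a) (a * r ^ (a - 1)) r :=
      hasDerivAt_rpow_const (Or.inl hr0.ne')
    have h2 : HasDerivAt (fun x : ℝ => (1 - x) ^ b) ((-1) * b * (1 - r) ^ (b - 1)) r :=
      ((hasDerivAt_id r).const_sub 1).rpow_const (Or.inl h1r.ne')
    have hd : HasDerivAt (fun x : ℝ => x ^ a * (1 - x) ^ b)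
        (a * r ^ (a - 1) * (1 - r) ^ b + r ^ a * ((-1) * b * (1 - r) ^ (b - 1))) r := h1.mul h2
    have hc : HasDerivAt (fun x : ℝ => C * (x - a)) C r := by
      simpa using ((hasDerivAt_id r).sub_const a).const_mul C
    have hF : HasDerivAt F
        ((C * (r ^ a * (1 - r) ^ b) - C * (r - a) *
          (a * r ^ (a - 1) * (1 - r) ^ b + r ^ a * ((-1) * b * (1 - r) ^ (b - 1)))) /
          (r ^ a * (1 - r) ^ b) ^ 2) r := hc.div hd (hd_pos r ⟨hr0, hr1⟩).ne'
    refine ⟨_, ?_, hF⟩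
    apply div_pos _ (pow_pos (hd_pos r ⟨hr0, hr1⟩) 2)
    have e1 : r ^ a = r ^ (a - 1) * r := by
      rw [← Real.rpow_add_one hr0.ne' (a - 1)]; ring_nf
    have e2 : (1 - r) ^ b = (1 - r) ^ (b - 1) * (1 - r) := by
      rw [← Real.rpow_add_one h1r.ne' (b - 1)]; ring_nf
    have hX : 0 < r ^ (a - 1) := rpow_pos_of_pos hr0 _
    have hY : 0 < (1 - r) ^ (b - 1) := rpow_pos_of_pos h1r _
    have key : (C * (r ^ a * (1 - r) ^ b) - C * (r - a) *
          (a * r ^ (a - 1) * (1 - r) ^ b + r ^ a * ((-1) * b * (1 - r) ^ (b - 1))))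
        = C * (r ^ (a - 1) * (1 - r) ^ (b - 1)) * (a^2 * (1 - r) + (1 - a)^2 * r) := by
      rw [e1, e2, hb_def]; ring
    rw [key]
    have ha1' : a < 1 := ha1
    have : 0 < a^2 * (1 - r) + (1 - a)^2 * r := by
      have := mul_pos (pow_pos ha0 2) h1r
      have := mul_pos (pow_pos (by linarith : (0:ℝ) < 1 - a) 2) hr0
      linarith
    positivity
  -- strict mono
  have hFmono : StrictMonoOn F (Set.Ioo 0 1) := by
    apply strictMonoOn_of_deriv_pos (convex_Ioo 0 1)
    · intro x hx
      obtain ⟨v, _, hv⟩ := hderiv x hx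
      exact hv.continuousAt.continuousWithinAt
    · rw [interior_Ioo]
      intro x hx
      obtain ⟨v, hv0, hv⟩ := hderiv x hx
      rw [hv.deriv]; exact hv0
  have hmono : StrictMonoOn G (Set.Ioo 0 1) := by
    intro x hx y hy hxy
    rw [hGF x hx, hGF y hy]
    exact hFmono hx hy hxy
  -- tendsto at 0
  have hmem : ∀ᶠ r in 𝓝[Set.Ioo (0:ℝ) 1] 0, r ∈ Set.Ioo (0:ℝ) 1 := eventually_mem_nhdsWithin
  have hmem1 : ∀ᶠ r in 𝓝[Set.Ioo (0:ℝ) 1] 1, r ∈ Set.Ioo (0:ℝ) 1 := eventually_mem_nhdsWithin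
  have hcontA : ContinuousAt (fun x : ℝ => x ^ a) 0 :=
    Real.continuousAt_rpow_const 0 a (Or.inr ha0.le)
  have hcontB : ContinuousAt (fun x : ℝ => x ^ b) 0 :=
    Real.continuousAt_rpow_const 0 b (Or.inr hb0.le)
  have hd0 : Tendsto (fun r : ℝ => r ^ a * (1 - r) ^ b) (𝓝[Set.Ioo (0:ℝ) 1] 0) (𝓝[>] 0) := by
    rw [tendsto_nhdsWithin_iff]
    constructor
    · have t1 : Tendsto (fun r : ℝ => r ^ a) (𝓝 (0:ℝ)) (𝓝 0) := by
        have := hcontA.tendsto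
        rwa [Real.zero_rpow ha0.ne'] at this
      have t2 : Tendsto (fun r : ℝ => (1 - r) ^ b) (𝓝 (0:ℝ)) (𝓝 1) := by
        have hc : ContinuousAt (fun r : ℝ => (1 - r) ^ b) 0 := by
          apply ContinuousAt.rpow_const
          · exact (continuous_const.sub continuous_id).continuousAt
          · left; norm_num
        have := hc.tendsto
        simpa using this
      simpa using ((t1.mul t2).mono_left nhdsWithin_le_nhds)
    · filter_upwards [hmem] with r hr using hd_pos r hr
  have hd1 : Tendsto (fun r : ℝ => r ^ a * (1 - r) ^ b) (𝓝[Set.Ioo (0:ℝ) 1] 1) (𝓝[>] 0) := by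
    rw [tendsto_nhdsWithin_iff]
    constructor
    · have t1 : Tendsto (fun r : ℝ => r ^ a) (𝓝 (1:ℝ)) (𝓝 1) := by
        have hc : ContinuousAt (fun r : ℝ => r ^ a) 1 :=
          Real.continuousAt_rpow_const 1 a (Or.inl one_ne_zero)
        have := hc.tendsto
        simpa using this
      have t2 : Tendsto (fun r : ℝ => (1 - r) ^ b) (𝓝 (1:ℝ)) (𝓝 0) := by
        have hs : Tendsto (fun r : ℝ => 1 - r) (𝓝 (1:ℝ)) (𝓝 0) := by
          have h : Continuous fun r : ℝ => 1 - r := by continuity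
          simpa using h.tendsto 1
        have := hcontB.tendsto.comp hs
        rwa [Real.zero_rpow hb0.ne'] at this
      simpa using ((t1.mul t2).mono_left nhdsWithin_le_nhds)
    · filter_upwards [hmem1] with r hr using hd_pos r hr
  have hF0 : Tendsto F (𝓝[Set.Ioo (0:ℝ) 1] 0) atBot := by
    have hnum : Tendsto (fun r : ℝ => C * (r - a)) (𝓝[Set.Ioo (0:ℝ) 1] 0) (𝓝 (C * (0 - a))) := by
      exact ((tendsto_id.sub_const a).const_mul C).mono_left nhdsWithin_le_nhds
    have hCa : C * (0 - a) < 0 := by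
      have : 0 < C * a := mul_pos hC0 ha0
      linarith
    have := hnum.neg_mul_atTop hCa hd0.inv_tendsto_nhdsGT_zero
    refine this.congr fun r => ?_
    simp [hF_def, div_eq_mul_inv]
  have hF1 : Tendsto F (𝓝[Set.Ioo (0:ℝ) 1] 1) atTop := by
    have hnum : Tendsto (fun r : ℝ => C * (r - a)) (𝓝[Set.Ioo (0:ℝ) 1] 1) (𝓝 (C * (1 - a))) := by
      exact ((tendsto_id.sub_const a).const_mul C).mono_left nhdsWithin_le_nhds
    have hCa : 0 < C * (1 - a) := mul_pos hC0 (by linarith)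
    have := hnum.pos_mul_atTop hCa hd1.inv_tendsto_nhdsGT_zero
    refine this.congr fun r => ?_
    simp [hF_def, div_eq_mul_inv]
  have hG0 : Tendsto G (𝓝[Set.Ioo (0:ℝ) 1] 0) atBot := by
    refine hF0.congr' ?_
    filter_upwards [hmem] with r hr using (hGF r hr).symm
  have hG1 : Tendsto G (𝓝[Set.Ioo (0:ℝ) 1] 1) atTop := by
    refine hF1.congr' ?_
    filter_upwards [hmem1] with r hr using (hGF r hr).symm
  have hGa : G a = 0 := by
    rw [hGF a ⟨ha0, ha1⟩, hF_def]
    simp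
  exact ⟨hmono, hG0, hGa, hG1⟩
end

section
/- The function Q(r) sin θ is a first integral of the planar system ṙ = F(r) cos θ, θ̇ = G(r) sin θ on (0,1) × ℝ: along any C¹ solution (r(t), θ(t)), the quantity Q(r(t)) sin θ(t) is constant. -/
open Real

/-!
Along a solution, `d/dt (Q(r) sin θ) = sin θ cos θ · (Q'(r) F(r) + Q(r) G(r))`, so it suffices that
`Q' F + Q G` vanishes on `(0,1)`. Logarithmic differentiation gives
`Q' = Q · (1/(p r) - 1/(q (1 - r)))`, and since `1/p + 1/q = 1` the bracket equals
`-(r - 1/p)/(r (1 - r))`, while `G = F · (r - 1/p)/(r (1 - r))`.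
-/

theorem sin_mul_first_integral {F G Q dQ r θ : ℝ → ℝ}
    (hQ : ∀ t, HasDerivAt Q (dQ (r t)) (r t))
    (hr : ∀ t, HasDerivAt r (F (r t) * cos (θ t)) t)
    (hθ : ∀ t, HasDerivAt θ (G (r t) * sin (θ t)) t)
    (hbalance : ∀ t, dQ (r t) * F (r t) + Q (r t) * G (r t) = 0) (t s : ℝ) :
    Q (r t) * sin (θ t) = Q (r s) * sin (θ s) := by
  have hderiv : ∀ u, HasDerivAt (fun t => Q (r t) * sin (θ t)) 0 u := by
    intro u
    refine (((hQ u).comp u (hr u)).mul (hθ u).sin).congr_deriv ?_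
    rw [Function.comp_apply]
    linear_combination sin (θ u) * cos (θ u) * hbalance u
  exact is_const_of_deriv_eq_zero (fun u => (hderiv u).differentiableAt)
    (fun u => (hderiv u).deriv) t s

theorem hasDerivAt_mul_rpow_mul_one_sub_rpow {a b α β x : ℝ} (ha : 0 < a) (hb : 0 < b)
    (hx : x ∈ Set.Ioo (0 : ℝ) 1) :
    HasDerivAt (fun y => (a * y) ^ α * (b * (1 - y)) ^ β)
      ((a * x) ^ α * (b * (1 - x)) ^ β * (α / x - β / (1 - x))) x := by
  obtain ⟨hx0, hx1⟩ := hx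
  have hax : 0 < a * x := mul_pos ha hx0
  have hbx : 0 < b * (1 - x) := mul_pos hb (sub_pos.mpr hx1)
  have hA := ((hasDerivAt_id' x).const_mul a).rpow_const (p := α) (Or.inl hax.ne')
  have hB := (((hasDerivAt_id' x).const_sub 1).const_mul b).rpow_const
    (p := β) (Or.inl hbx.ne')
  refine (hA.mul hB).congr_deriv ?_
  rw [rpow_sub_one hax.ne', rpow_sub_one hbx.ne']
  field_simp [hx0.ne', (sub_pos.mpr hx1).ne']
  ring

theorem mul_rpow_div_self_of_add_eq_one {c x α β : ℝ} (hc : 0 < c) (hx : 0 < x)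
    (hαβ : α + β = 1) : (c * x) ^ β / x = c ^ β / x ^ α := by
  rw [mul_rpow hc.le hx.le, eq_sub_of_add_eq' hαβ, rpow_sub hx, rpow_one]
  field_simp [(rpow_pos_of_pos hx α).ne']

theorem mul_rpow_mul_one_sub_rpow_div_of_add_eq_one {c d α β x : ℝ} (hc : 0 < c) (hd : 0 < d)
    (hαβ : α + β = 1) (hx : x ∈ Set.Ioo (0 : ℝ) 1) :
    (c * x) ^ β * (d * (1 - x)) ^ α / (x * (1 - x)) = c ^ β * d ^ α / (x ^ α * (1 - x) ^ β) :=
  calc (c * x) ^ β * (d * (1 - x)) ^ α / (x * (1 - x))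
      = (c * x) ^ β / x * ((d * (1 - x)) ^ α / (1 - x)) := by rw [← div_div]; ring
    _ = c ^ β / x ^ α * (d ^ α / (1 - x) ^ β) := by
      rw [mul_rpow_div_self_of_add_eq_one hc hx.1 hαβ,
        mul_rpow_div_self_of_add_eq_one hd (sub_pos.mpr hx.2) ((add_comm _ _).trans hαβ)]
    _ = c ^ β * d ^ α / (x ^ α * (1 - x) ^ β) := by ring

/-- `Q(r) sin θ` is a first integral of the reduced planar system
`ṙ = F(r) cos θ`, `θ̇ = G(r) sin θ` on `(0,1) × ℝ`. -/
theorem Q_sin_first_integral (p q : ℝ) (hp : 1 < p) (hq : q = p / (p - 1))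
    (F G Q : ℝ → ℝ)
    (hF : ∀ r, F r = (p * r) ^ (1/q) * (q * (1 - r)) ^ (1/p))
    (hG : ∀ r ∈ Set.Ioo (0:ℝ) 1,
      G r = p ^ (1/q) * q ^ (1/p) * (r - 1/p) / (r ^ (1/p) * (1 - r) ^ (1/q)))
    (hQ : ∀ r, Q r = (p * r) ^ (1/p) * (q * (1 - r)) ^ (1/q))
    (r θ : ℝ → ℝ)
    (hr01 : ∀ t, r t ∈ Set.Ioo (0:ℝ) 1)
    (hr : ∀ t, HasDerivAt r (F (r t) * Real.cos (θ t)) t)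
    (hθ : ∀ t, HasDerivAt θ (G (r t) * Real.sin (θ t)) t) :
    ∀ t s : ℝ, Q (r t) * Real.sin (θ t) = Q (r s) * Real.sin (θ s) := by
  have hp0 : 0 < p := one_pos.trans hp
  have hq0 : 0 < q := by rw [hq]; exact div_pos hp0 (sub_pos.mpr hp)
  have hp1 : p - 1 ≠ 0 := (sub_pos.mpr hp).ne'
  have hconj : 1 / p + 1 / q = 1 := by rw [hq]; field_simp; ring
  have hpq : p * q = p + q := by rw [hq]; field_simp; ring
  have hQfun : Q = fun x => (p * x) ^ (1/p) * (q * (1 - x)) ^ (1/q) := funext hQ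
  refine sin_mul_first_integral (dQ := fun x => Q x * (1/p / x - 1/q / (1 - x))) ?_ hr hθ ?_
  · intro t
    rw [hQfun]
    exact hasDerivAt_mul_rpow_mul_one_sub_rpow hp0 hq0 (hr01 t)
  · intro t
    obtain ⟨hx0, hx1⟩ := hr01 t
    have hGF : G (r t) = F (r t) / (r t * (1 - r t)) * (r t - 1/p) := by
      rw [hG _ (hr01 t), hF, mul_rpow_mul_one_sub_rpow_div_of_add_eq_one hp0 hq0 hconj (hr01 t)]
      ring
    rw [hGF]
    field_simp
    linear_combination (Q (r t) * F (r t) * r t) * hpq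
end

section
/- For each n ∈ ℕ, λ̃ₙ = (2nπ)^p is a 1-periodic eigenvalue of the vectorial p-Laplacian in ℝ²: the function x(t) = Ã (cos(2nπ(t+φ₀)), sin(2nπ(t+φ₀))), for any Ã > 0 and φ₀ ∈ ℝ, is a nonzero 1-periodic solution of (φ_p(ẋ))' + λ̃ₙ φ_p(x) = 0. -/
/-!
Write `x t = A • e (ω * (t + φ₀))` with `e θ = (cos θ, sin θ)` and `ω = 2nπ`. The speed
`‖ẋ‖ = Aω` is constant, so `φ_p(ẋ) = (Aω)^(p-2) • ẋ` and its derivative is `(Aω)^(p-2) • ẍ`;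
since `ẍ = -ω² • x` and `(Aω)^(p-2) ω² = ω^p A^(p-2)`, this is `-ω^p • φ_p(x)`.
-/

open Real

noncomputable def circleVec (θ : ℝ) : EuclideanSpace ℝ (Fin 2) := !₂[cos θ, sin θ]

lemma norm_circleVec (θ : ℝ) : ‖circleVec θ‖ = 1 := by
  simp [circleVec, EuclideanSpace.norm_eq, Fin.sum_univ_two]

lemma norm_smul_circleVec (a θ : ℝ) : ‖a • circleVec θ‖ = |a| := by
  rw [norm_smul, norm_circleVec, mul_one, Real.norm_eq_abs]

lemma circleVec_add_pi (θ : ℝ) : circleVec (θ + π) = -circleVec θ := by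
  ext i; fin_cases i <;> simp [circleVec]

lemma circleVec_periodic : Function.Periodic circleVec (2 * π) := fun θ => by
  simp [circleVec]

lemma circleVec_eq_smul_single (θ : ℝ) :
    circleVec θ = cos θ • EuclideanSpace.single 0 1 + sin θ • EuclideanSpace.single 1 1 := by
  ext i; fin_cases i <;> simp [circleVec]

lemma hasDerivAt_circleVec (θ : ℝ) : HasDerivAt circleVec (circleVec (θ + π / 2)) θ := by
  rw [funext circleVec_eq_smul_single]
  beta_reduce
  rw [cos_add_pi_div_two, sin_add_pi_div_two]
  exact ((hasDerivAt_cos θ).smul_const (EuclideanSpace.single 0 1 : EuclideanSpace ℝ (Fin 2))).add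
    ((hasDerivAt_sin θ).smul_const (EuclideanSpace.single 1 1 : EuclideanSpace ℝ (Fin 2)))

lemma HasDerivAt.smul_circleVec {u : ℝ → ℝ} {u' t : ℝ} (hu : HasDerivAt u u' t) (a : ℝ) :
    HasDerivAt (fun s => a • circleVec (u s)) ((a * u') • circleVec (u t + π / 2)) t := by
  rw [mul_smul]
  exact ((hasDerivAt_circleVec (u t)).scomp t hu).const_smul a

lemma hasDerivAt_mul_add (ω φ t : ℝ) : HasDerivAt (fun s => ω * (s + φ)) ω t := by
  simpa using ((hasDerivAt_id t).add_const φ).const_mul ω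

-- `p ≠ 0` is what makes this hold at `x = 0`, where `0 ^ 0 = 1`.
lemma rpow_sub_two_mul_sq {p : ℝ} (hp : p ≠ 0) {x : ℝ} (hx : 0 ≤ x) :
    x ^ (p - 2) * x ^ 2 = x ^ p := by
  rw [← rpow_add_natCast' hx] <;> norm_num [hp]

lemma hasDerivAt_flux_circleVec {p ω : ℝ} (hp : p ≠ 0) (hω : 0 ≤ ω) (a φ t : ℝ) :
    HasDerivAt (fun s => ‖(a * ω) • circleVec (ω * (s + φ) + π / 2)‖ ^ (p - 2) •
        (a * ω) • circleVec (ω * (s + φ) + π / 2))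
      (-(ω ^ p • (‖a • circleVec (ω * (t + φ))‖ ^ (p - 2) • a • circleVec (ω * (t + φ))))) t := by
  simp_rw [norm_smul_circleVec, smul_smul]
  have h := ((hasDerivAt_mul_add ω φ t).add_const (π / 2)).smul_circleVec
    (|a * ω| ^ (p - 2) * (a * ω))
  rw [add_assoc, add_halves, circleVec_add_pi] at h
  convert h using 1
  rw [smul_neg, abs_mul, abs_of_nonneg hω, mul_rpow (abs_nonneg a) hω,
    ← rpow_sub_two_mul_sq hp hω]
  congr 2
  ring

theorem circular_eigenfunctions_general (p : ℝ) (hp : 1 < p) (n : ℕ)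
    (A φ₀ : ℝ) (hA : 0 < A)
    (x : ℝ → EuclideanSpace ℝ (Fin 2))
    (hx0 : ∀ t, x t 0 = A * Real.cos (2 * n * π * (t + φ₀)))
    (hx1 : ∀ t, x t 1 = A * Real.sin (2 * n * π * (t + φ₀))) :
    (∀ t, x t ≠ 0) ∧
    (∀ t, x (t + 1) = x t) ∧
    ∃ x' : ℝ → EuclideanSpace ℝ (Fin 2),
      (∀ t, HasDerivAt x (x' t) t) ∧
      (∀ t, HasDerivAt (fun s => ‖x' s‖ ^ (p - 2) • x' s)
        (-(((2 * n * π) ^ p) • (‖x t‖ ^ (p - 2) • x t))) t) := by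
  set ω : ℝ := 2 * n * π
  have hx : x = fun t => A • circleVec (ω * (t + φ₀)) := by
    funext t; ext i; fin_cases i <;> simp [circleVec, hx0, hx1]
  subst hx
  refine ⟨fun t => ?_, fun t => ?_, fun t => (A * ω) • circleVec (ω * (t + φ₀) + π / 2),
    fun t => (hasDerivAt_mul_add ω φ₀ t).smul_circleVec A,
    hasDerivAt_flux_circleVec (zero_lt_one.trans hp).ne' (by positivity) A φ₀⟩
  · rw [← norm_pos_iff, norm_smul_circleVec]
    positivity
  · dsimp only
    rw [show ω * (t + 1 + φ₀) = ω * (t + φ₀) + n * (2 * π) by ring, circleVec_periodic.nat_mul n]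

/-- For each `n ≥ 1`, `λ̃ₙ = (2nπ)^p` is a 1-periodic eigenvalue of the
vectorial `p`-Laplacian in `ℝ²`: the circular motion
`x(t) = Ã (cos(2nπ(t+φ₀)), sin(2nπ(t+φ₀)))`, for any `Ã > 0` and `φ₀ ∈ ℝ`, is a nonzero
1-periodic solution of `(φ_p(ẋ))' + λ̃ₙ φ_p(x) = 0`. -/
theorem circular_eigenfunctions (p : ℝ) (hp : 1 < p) (n : ℕ) (hn : 1 ≤ n)
    (A φ₀ : ℝ) (hA : 0 < A)
    (x : ℝ → EuclideanSpace ℝ (Fin 2))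
    (hx0 : ∀ t, x t 0 = A * Real.cos (2 * n * π * (t + φ₀)))
    (hx1 : ∀ t, x t 1 = A * Real.sin (2 * n * π * (t + φ₀))) :
    (∀ t, x t ≠ 0) ∧
    (∀ t, x (t + 1) = x t) ∧
    ∃ x' : ℝ → EuclideanSpace ℝ (Fin 2),
      (∀ t, HasDerivAt x (x' t) t) ∧
      (∀ t, HasDerivAt (fun s => ‖x' s‖ ^ (p - 2) • x' s)
        (-(((2 * n * π) ^ p) • (‖x t‖ ^ (p - 2) • x t))) t) :=
  circular_eigenfunctions_general p hp n A φ₀ hA x hx0 hx1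
end
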